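/- Fix real numbers v1 ≤ v2 ≤ v3, an efficiency η with 0 < η ≤ 1, and a marginal discharge cost c ≥ 0, and let g : ℝ → ℝ be the associated piecewise marginal-value map (defined in the context). Let μ be an atomless probability measure on ℝ (the law of the price λ), and let F(x) = μ((−∞, x]) denote its cumulative distribution function. Then for every x ∈ ℝ, the probability μ({λ : g(λ) ≤ x}) equals: 0 if x < v1; F(x·η) if v1 ≤ x < v2; F(max(x/η + c, 0)) if v2 ≤ x < v3; and 1 if x ≥ v3. -/

import Mathlib

/-!
`g` takes values in `[v1, v3]`, which settles the two extreme ranges of `x`. On the middle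
ranges `g ≤ x` holds strictly left of a threshold `a` and fails strictly right of it, where
`a = x η` inverts the charging branch `λ ↦ λ / η` and `a = max (x / η + c) 0` inverts the
discharging branch `λ ↦ η (λ - c)`; the idle branch (value `v2`) sits between the two because
`v2 η ≤ max (v2 / η + c) 0`. So `{g ≤ x}` lies between `Iio a` and `Iic a`, and as `μ` has no
atoms its measure is `F a`.
-/

/-- The piecewise marginal-value map `g` from Theorem 1: the marginal value
`q_{t−1}(e)` of stored energy given a price realization, where `v1, v2, v3` are the
next-period marginal values at the full-charge, idle, and full-discharge ending SoC. -/
noncomputable def marginalValue (v1 v2 v3 η c : ℝ) (p : ℝ) : ℝ :=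
  if p < v1 * η then v1
  else if p < v2 * η then p / η
  else if p < max (v2 / η + c) 0 then v2
  else if p < max (v3 / η + c) 0 then η * (p - c)
  else v3

open MeasureTheory

theorem measure_eq_measure_Iic_of_Iio_subset_of_subset_Iic {α : Type*} [PartialOrder α]
    [MeasurableSpace α] {μ : Measure α} [NullSingletonClass μ] {s : Set α} {a : α}
    (hIio : Set.Iio a ⊆ s) (hIic : s ⊆ Set.Iic a) : μ s = μ (Set.Iic a) :=
  le_antisymm (measure_mono hIic)
    ((measure_congr Iio_ae_eq_Iic).symm.trans_le (measure_mono hIio))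

section marginalValue

variable {v1 v2 v3 η c p x : ℝ}

theorem mul_le_max_div_add (hη0 : 0 < η) (hη1 : η ≤ 1) (hc : 0 ≤ c) (v : ℝ) :
    v * η ≤ max (v / η + c) 0 := by
  rcases lt_or_ge v 0 with hv | hv
  · exact (mul_neg_of_neg_of_pos hv hη0).le.trans (le_max_right _ _)
  · calc v * η ≤ v := mul_le_of_le_one_right hv hη1
      _ ≤ v / η := le_div_self hv hη0 hη1
      _ ≤ v / η + c := le_add_of_nonneg_right hc
      _ ≤ _ := le_max_left _ _

theorem marginalValue_le_of_lt_max (h12 : v1 ≤ v2) (hη0 : 0 < η)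
    (hp : p < max (v2 / η + c) 0) : marginalValue v1 v2 v3 η c p ≤ v2 := by
  unfold marginalValue
  split_ifs with h1 h2
  · exact h12
  · exact ((div_lt_iff₀ hη0).2 h2).le
  · exact le_rfl

theorem le_marginalValue_of_mul_le (h12 : v1 ≤ v2) (h23 : v2 ≤ v3) (hη0 : 0 < η)
    (hp : v2 * η ≤ p) :
    v2 ≤ marginalValue v1 v2 v3 η c p := by
  unfold marginalValue
  split_ifs with h1 h2 h3
  · exact absurd hp (not_le.2 (h1.trans_le (mul_le_mul_of_nonneg_right h12 hη0.le)))
  · exact absurd hp (not_le.2 h2)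
  · exact le_rfl
  · have : v2 / η + c ≤ p := (le_max_left _ _).trans (not_lt.1 h3)
    rw [← div_le_iff₀' hη0]
    linarith
  · exact h23

theorem le_marginalValue (h12 : v1 ≤ v2) (h23 : v2 ≤ v3) (hη0 : 0 < η) :
    v1 ≤ marginalValue v1 v2 v3 η c p := by
  by_cases hp : v2 * η ≤ p
  · exact h12.trans (le_marginalValue_of_mul_le h12 h23 hη0 hp)
  unfold marginalValue
  split_ifs with h1 h2
  · exact le_rfl
  · exact (le_div_iff₀ hη0).2 (not_lt.1 h1)
  all_goals exact absurd (not_lt.1 h2) hp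

theorem marginalValue_le (h12 : v1 ≤ v2) (h23 : v2 ≤ v3) (hη0 : 0 < η) :
    marginalValue v1 v2 v3 η c p ≤ v3 := by
  by_cases hp : p < max (v2 / η + c) 0
  · exact (marginalValue_le_of_lt_max h12 hη0 hp).trans h23
  have hp0 : 0 ≤ p := (le_max_right _ _).trans (not_lt.1 hp)
  unfold marginalValue
  split_ifs with h1 h2 h3
  · exact h12.trans h23
  · exact ((div_lt_iff₀ hη0).2 h2).le.trans h23
  · have : p < v3 / η + c := (lt_max_iff.1 h3).resolve_right hp0.not_gt
    rw [← le_div_iff₀' hη0]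
    linarith
  · exact le_rfl

theorem Iio_mul_subset_setOf_marginalValue_le (h1x : v1 ≤ x) (hx2 : x < v2) (hη0 : 0 < η) :
    Set.Iio (x * η) ⊆ {p | marginalValue v1 v2 v3 η c p ≤ x} := by
  intro p (hp : p < x * η)
  have hp2 : p < v2 * η := hp.trans (mul_lt_mul_of_pos_right hx2 hη0)
  simp only [Set.mem_ofPred_eq, marginalValue, hp2, if_true]
  split_ifs
  · exact h1x
  · exact ((div_lt_iff₀ hη0).2 hp).le

theorem setOf_marginalValue_le_subset_Iic_mul (h12 : v1 ≤ v2) (h23 : v2 ≤ v3) (h1x : v1 ≤ x)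
    (hx2 : x < v2) (hη0 : 0 < η) :
    {p | marginalValue v1 v2 v3 η c p ≤ x} ⊆ Set.Iic (x * η) := by
  intro p (hp : marginalValue v1 v2 v3 η c p ≤ x)
  by_contra hxp
  rw [Set.mem_Iic, not_le] at hxp
  by_cases hp2 : v2 * η ≤ p
  · exact hx2.not_ge (hp.trans' (le_marginalValue_of_mul_le h12 h23 hη0 hp2))
  have hp1 : ¬ p < v1 * η := fun h => hxp.not_gt (h.trans_le (by gcongr))
  simp only [marginalValue, hp1, not_le.1 hp2, if_false, if_true] at hp
  exact hp.not_gt ((lt_div_iff₀ hη0).2 hxp)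

theorem Iio_max_subset_setOf_marginalValue_le (h12 : v1 ≤ v2) (h2x : v2 ≤ x) (hx3 : x < v3)
    (hη0 : 0 < η) :
    Set.Iio (max (x / η + c) 0) ⊆ {p | marginalValue v1 v2 v3 η c p ≤ x} := by
  intro p (hp : p < max (x / η + c) 0)
  show marginalValue v1 v2 v3 η c p ≤ x
  by_cases hp2 : p < max (v2 / η + c) 0
  · exact (marginalValue_le_of_lt_max h12 hη0 hp2).trans h2x
  have hp0 : 0 ≤ p := (le_max_right _ _).trans (not_lt.1 hp2)
  have hpx : p < x / η + c := (lt_max_iff.1 hp).resolve_right hp0.not_gt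
  have hp3 : p < max (v3 / η + c) 0 := hp.trans_le (by gcongr)
  simp only [marginalValue, hp2, hp3, if_false, if_true]
  split_ifs with h1 h2
  · exact h12.trans h2x
  · exact ((div_lt_iff₀ hη0).2 h2).le.trans h2x
  · rw [← le_div_iff₀' hη0]
    linarith

theorem setOf_marginalValue_le_subset_Iic_max (h12 : v1 ≤ v2) (h2x : v2 ≤ x) (hx3 : x < v3)
    (hη0 : 0 < η) (hη1 : η ≤ 1) (hc : 0 ≤ c) :
    {p | marginalValue v1 v2 v3 η c p ≤ x} ⊆ Set.Iic (max (x / η + c) 0) := by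
  intro p (hp : marginalValue v1 v2 v3 η c p ≤ x)
  by_contra hxp
  rw [Set.mem_Iic, not_le] at hxp
  have hv2x : max (v2 / η + c) 0 ≤ max (x / η + c) 0 := by gcongr
  have hp2 : v2 * η ≤ p := (mul_le_max_div_add hη0 hη1 hc v2).trans (hv2x.trans hxp.le)
  have hp1 : ¬ p < v1 * η := not_lt.2 ((mul_le_mul_of_nonneg_right h12 hη0.le).trans hp2)
  simp only [marginalValue, hp1, not_lt.2 hp2, not_lt.2 (hv2x.trans hxp.le), if_false] at hp
  split_ifs at hp
  · rw [← le_div_iff₀' hη0] at hp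
    linarith [(max_lt_iff.1 hxp).1]
  · exact hx3.not_ge hp

end marginalValue

/-- Theorem 1 (SoC price distribution): for an atomless price law `μ` with CDF
`F x = μ (Set.Iic x)`, the cumulative distribution of the marginal arbitrage profit
`g(λ)` is `0` below `v1`, `F(x·η)` on `[v1, v2)`, `F(max(x/η + c, 0))` on
`[v2, v3)`, and `1` from `v3` on. -/
theorem marginalValue_cdf
    (v1 v2 v3 η c : ℝ) (h12 : v1 ≤ v2) (h23 : v2 ≤ v3)
    (hη0 : 0 < η) (hη1 : η ≤ 1) (hc : 0 ≤ c)
    (μ : Measure ℝ) [IsProbabilityMeasure μ] [NullSingletonClass μ]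
    (F : ℝ → ENNReal) (hF : ∀ x : ℝ, F x = μ (Set.Iic x)) :
    ∀ x : ℝ,
      (x < v1 → μ {p : ℝ | marginalValue v1 v2 v3 η c p ≤ x} = 0) ∧
      (v1 ≤ x → x < v2 →
        μ {p : ℝ | marginalValue v1 v2 v3 η c p ≤ x} = F (x * η)) ∧
      (v2 ≤ x → x < v3 →
        μ {p : ℝ | marginalValue v1 v2 v3 η c p ≤ x} = F (max (x / η + c) 0)) ∧
      (v3 ≤ x → μ {p : ℝ | marginalValue v1 v2 v3 η c p ≤ x} = 1) := by
  intro x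
  refine ⟨fun hx => ?_, fun h1x hx2 => ?_, fun h2x hx3 => ?_, fun hx => ?_⟩
  · convert measure_empty (μ := μ)
    exact Set.eq_empty_of_forall_notMem fun p hp =>
      hx.not_ge ((le_marginalValue h12 h23 hη0).trans hp)
  · rw [hF]
    exact measure_eq_measure_Iic_of_Iio_subset_of_subset_Iic
      (Iio_mul_subset_setOf_marginalValue_le h1x hx2 hη0)
      (setOf_marginalValue_le_subset_Iic_mul h12 h23 h1x hx2 hη0)
  · rw [hF]
    exact measure_eq_measure_Iic_of_Iio_subset_of_subset_Iic
      (Iio_max_subset_setOf_marginalValue_le h12 h2x hx3 hη0)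
      (setOf_marginalValue_le_subset_Iic_max h12 h2x hx3 hη0 hη1 hc)
  · convert measure_univ (μ := μ)
    exact Set.eq_univ_of_forall fun p => (marginalValue_le h12 h23 hη0).trans hx
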